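/- Let φₙ : S¹ → ℝ² be continuous injective maps converging uniformly to a continuous injective map φ : S¹ → ℝ². For each n let Γₙ = {σ ∈ Σ : (φₙ(σ₀), φₙ(σ₁), φₙ(σ₂), φₙ(σ₃)) is a labeled rectangle}, and let Γ = {σ ∈ Σ : (φ(σ₀), φ(σ₁), φ(σ₂), φ(σ₃)) is a labeled rectangle}. Suppose that for each n, Γₙ contains a path-connected subset Aₙ containing a member with circular invariant Λ = n and a member with circular invariant Λ = 1/n. Then Γ contains an extensive subset, i.e. a connected set A ⊆ Γ with Λ(A) = (0,∞). -/

import Mathlib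

open Set Filter

noncomputable section

abbrev S1 : Type := ↥(Metric.sphere (0 : ℂ) 1)

def expMap (t : ℝ) : S1 :=
  ⟨Complex.exp (t * Complex.I), by
    simp [Metric.mem_sphere, Complex.dist_eq, Complex.norm_exp_ofReal_mul_I]⟩

def CCW4 (s : Fin 4 → S1) : Prop :=
  ∃ θ : Fin 4 → ℝ,
    (∀ k, (s k : ℂ) = Complex.exp (θ k * Complex.I)) ∧
    θ 0 < θ 1 ∧ θ 1 < θ 2 ∧ θ 2 < θ 3 ∧ θ 3 < θ 0 + 2 * Real.pi

def CCW3 (s : Fin 3 → S1) : Prop :=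
  ∃ θ : Fin 3 → ℝ,
    (∀ k, (s k : ℂ) = Complex.exp (θ k * Complex.I)) ∧
    θ 0 < θ 1 ∧ θ 1 < θ 2 ∧ θ 2 < θ 0 + 2 * Real.pi

def IsLabeledRect (R : Fin 4 → ℂ) : Prop :=
  R 1 ≠ R 0 ∧ ∃ r : ℝ, 0 < r ∧
    R 2 - R 1 = Complex.I * r * (R 1 - R 0) ∧ R 3 = R 0 + (R 2 - R 1)

def aspect (R : Fin 4 → ℂ) : ℝ := ‖R 2 - R 1‖ / ‖R 1 - R 0‖
def rectArea (R : Fin 4 → ℂ) : ℝ := ‖R 1 - R 0‖ * ‖R 2 - R 1‖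
def rectDiam (R : Fin 4 → ℂ) : ℝ := ‖R 2 - R 0‖

def inscribed (γ : Set ℂ) : Set (Fin 4 → ℂ) := {R | IsLabeledRect R ∧ ∀ k, R k ∈ γ}

def Graceful (φ : S1 → ℂ) (R : Fin 4 → ℂ) : Prop :=
  ∃ s : Fin 4 → S1, CCW4 s ∧ ∀ k, φ (s k) = R k

def gracefulRects (φ : S1 → ℂ) : Set (Fin 4 → ℂ) :=
  {R | R ∈ inscribed (Set.range φ) ∧ Graceful φ R}

def vertexSet (S : Set (Fin 4 → ℂ)) : Set ℂ := {p | ∃ R ∈ S, ∃ k, R k = p}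
def aspectSet (S : Set (Fin 4 → ℂ)) : Set ℝ := aspect '' S

def relabel (R : Fin 4 → ℂ) : Fin 4 → ℂ := fun k => R (k + 1)

def WindsOnce (φ : S1 → ℂ) (p : ℂ) : Prop :=
  ∃ a : ℝ → ℝ, Continuous a ∧ a (2 * Real.pi) = a 0 + 2 * Real.pi ∧
    ∀ t : ℝ, φ (expMap t) - p =
      (‖φ (expMap t) - p‖ : ℂ) * Complex.exp (a t * Complex.I)

def IsCCWJordan (φ : S1 → ℂ) : Prop :=
  Continuous φ ∧ Function.Injective φ ∧
  ∀ p : ℂ, p ∉ Set.range φ →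
    Bornology.IsBounded (connectedComponentIn (Set.range φ)ᶜ p) →
    WindsOnce φ p

def IsPolygon (γ : Set ℂ) : Prop :=
  ∃ (n : ℕ) (a b : Fin n → ℂ), γ = ⋃ i, segment ℝ (a i) (b i)

def ccwArc (x y : ℂ) : ℝ :=
  if 0 ≤ Complex.arg (y / x) then Complex.arg (y / x)
  else Complex.arg (y / x) + 2 * Real.pi

def Lam (σ : Fin 4 → S1) : ℝ :=
  (ccwArc (σ 0 : ℂ) (σ 1 : ℂ) + ccwArc (σ 2 : ℂ) (σ 3 : ℂ)) /
  (ccwArc (σ 1 : ℂ) (σ 2 : ℂ) + ccwArc (σ 3 : ℂ) (σ 0 : ℂ))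

def ccwArcSet (x y : S1) : Set S1 :=
  {z | ccwArc (x : ℂ) (z : ℂ) ≤ ccwArc (x : ℂ) (y : ℂ)}

def signedArea (p q r : ℂ) : ℝ :=
  ((q - p).re * (r - p).im - (q - p).im * (r - p).re) / 2

def NonzeroWinding (f : ℝ → S1) : Prop :=
  ∃ a : ℝ → ℝ, ContinuousOn a (Set.Icc 0 1) ∧
    (∀ t ∈ Set.Icc (0:ℝ) 1, (f t : ℂ) = Complex.exp (a t * Complex.I)) ∧
    ∃ m : ℤ, m ≠ 0 ∧ a 1 - a 0 = 2 * Real.pi * m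

def SimpleQuad (P : Fin 4 → ℂ) : Prop :=
  Function.Injective P ∧
  (∀ k : Fin 4, segment ℝ (P k) (P (k + 1)) ∩ segment ℝ (P (k + 1)) (P (k + 2)) = {P (k + 1)}) ∧
  (∀ k : Fin 4, segment ℝ (P k) (P (k + 1)) ∩ segment ℝ (P (k + 2)) (P (k + 3)) = ∅)

def shoelace (P : Fin 4 → ℂ) : ℝ :=
  (∑ k : Fin 4, ((P k).re * (P (k + 1)).im - (P (k + 1)).re * (P k).im)) / 2

def DegenChord (ζ : Fin 4 → ℂ) : Prop :=
  ∃ z w : ℂ, z ≠ w ∧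
    (ζ = ![z, z, w, w] ∨ ζ = ![w, z, z, w] ∨ ζ = ![w, w, z, z] ∨ ζ = ![z, w, w, z])


namespace LimitExt
open Complex

def caux (z : ℂ) : ℝ := if 0 ≤ Complex.arg z then Complex.arg z else Complex.arg z + 2 * Real.pi

lemma ccwArc_eq_caux (x y : ℂ) : ccwArc x y = caux (y / x) := rfl

def goodSet : Set ℂ := {w : ℂ | w.im ≠ 0 ∨ w.re < 0}

lemma caux_eq_aux {z : ℂ} (h : z ∈ goodSet) :
    caux z = Real.pi + Complex.arg (-z) := by
  rcases lt_trichotomy z.im 0 with hneg | him | hpos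
  · have h1 : Complex.arg z < 0 := Complex.arg_neg_iff.2 hneg
    have h2 : Complex.arg (-z) = Complex.arg z + Real.pi :=
      Complex.arg_neg_eq_arg_add_pi_of_im_neg hneg
    rw [caux, if_neg (not_le.2 h1), h2]; ring
  · have hre : z.re < 0 := by
      rcases h with h | h
      · exact absurd him h
      · exact h
    have h1 : Complex.arg z = Real.pi := Complex.arg_eq_pi_iff.2 ⟨hre, him⟩
    have h2 : Complex.arg (-z) = 0 := by
      rw [Complex.arg_eq_zero_iff]
      constructor
      · simp only [Complex.neg_re]; linarith
      · simp [him]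
    rw [caux, if_pos (by rw [h1]; exact Real.pi_pos.le), h1, h2]; ring
  · have h1 : 0 ≤ Complex.arg z := Complex.arg_nonneg_iff.2 hpos.le
    have h2 : Complex.arg (-z) = Complex.arg z - Real.pi :=
      Complex.arg_neg_eq_arg_sub_pi_of_im_pos hpos
    rw [caux, if_pos h1, h2]; ring

lemma isOpen_goodSet : IsOpen goodSet :=
  (isOpen_ne.preimage Complex.continuous_im).union
    ((isOpen_Iio (a := (0:ℝ))).preimage Complex.continuous_re)

lemma continuousAt_caux {z : ℂ} (h : z ∈ goodSet) : ContinuousAt caux z := by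
  have hc : ContinuousAt (fun w : ℂ => Real.pi + Complex.arg (-w)) z := by
    apply ContinuousAt.add continuousAt_const
    have : ContinuousAt Complex.arg (-z) := by
      apply Complex.continuousAt_arg
      · rcases h with h | h
        · exact Or.inr (by simpa using h)
        · exact Or.inl (by simpa using h)
    exact this.comp (continuousAt_neg (x := z))
  apply hc.congr
  filter_upwards [isOpen_goodSet.mem_nhds h] with w hw
  exact (caux_eq_aux hw).symm

lemma mem_goodSet_of_circle {z : ℂ} (habs : ‖z‖ = 1) (hne : z ≠ 1) : z ∈ goodSet := by
  by_contra hcon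
  simp only [goodSet, Set.mem_setOf_eq, not_or, not_ne_iff, not_lt] at hcon
  obtain ⟨him, hre⟩ := hcon
  apply hne
  have hz : z = (z.re : ℂ) := by
    apply Complex.ext <;> simp [him]
  rw [hz] at habs ⊢
  rw [Complex.norm_real, Real.norm_eq_abs] at habs; rw [_root_.abs_of_nonneg hre] at habs
  rw [habs]; norm_num

lemma expI_div (a b : ℝ) :
    Complex.exp (b * I) / Complex.exp (a * I) = Complex.exp ((b - a : ℝ) * I) := by
  rw [← Complex.exp_sub]; congr 1; push_cast; ring

lemma arg_expI_of_Ioc {t : ℝ} (h1 : -Real.pi < t) (h2 : t ≤ Real.pi) :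
    Complex.arg (Complex.exp (t * I)) = t := by
  rw [Complex.arg_exp_mul_I]
  exact (toIocMod_eq_self _).2 ⟨h1, by linarith⟩

lemma ccwArc_exp {a b : ℝ} (h0 : 0 < b - a) (h2 : b - a < 2 * Real.pi) :
    ccwArc (Complex.exp (a * I)) (Complex.exp (b * I)) = b - a := by
  have hpi := Real.pi_pos
  rw [ccwArc, expI_div]
  rcases le_or_gt (b - a) Real.pi with hle | hgt
  · rw [arg_expI_of_Ioc (by linarith) hle, if_pos h0.le]
  · have key : Complex.arg (Complex.exp ((b - a : ℝ) * I)) = b - a - 2 * Real.pi := by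
      have he : Complex.exp ((b - a : ℝ) * I) = Complex.exp ((b - a - 2 * Real.pi : ℝ) * I) := by
        rw [Complex.exp_eq_exp_iff_exists_int]
        exact ⟨1, by push_cast; ring⟩
      rw [he, arg_expI_of_Ioc (by linarith) (by linarith)]
    rw [key, if_neg (by push_neg; linarith)]
    ring

lemma expI_eq_iff {a b : ℝ} :
    Complex.exp (a * I) = Complex.exp (b * I) ↔ ∃ n : ℤ, a = b + n * (2 * Real.pi) := by
  rw [Complex.exp_eq_exp_iff_exists_int]
  constructor
  · rintro ⟨n, hn⟩
    refine ⟨n, ?_⟩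
    have h1 : ((a : ℂ)) * I = ((b + n * (2 * Real.pi) : ℝ)) * I := by
      rw [hn]; push_cast; ring
    have h2 := mul_right_cancel₀ Complex.I_ne_zero h1
    exact_mod_cast congrArg Complex.re h2
  · rintro ⟨n, hn⟩
    exact ⟨n, by rw [hn]; push_cast; ring⟩

lemma expI_ne_of_between {a b : ℝ} (h0 : 0 < b - a) (h2 : b - a < 2 * Real.pi) :
    Complex.exp (a * I) ≠ Complex.exp (b * I) := by
  intro heq
  obtain ⟨n, hn⟩ := expI_eq_iff.1 heq
  have hpi := Real.pi_pos
  rcases lt_trichotomy (n : ℝ) 0 with h | h | h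
  · have : (n : ℝ) ≤ -1 := by exact_mod_cast Int.le_of_lt_add_one (by exact_mod_cast h)
    nlinarith
  · rw [h, zero_mul, add_zero] at hn; linarith
  · have : (1 : ℝ) ≤ n := by exact_mod_cast h
    nlinarith

lemma S1.abs_coe (z : S1) : ‖(z : ℂ)‖ = 1 := by
  have h := z.2
  simpa [Complex.dist_eq] using h

lemma S1.coe_ne_zero (z : S1) : (z : ℂ) ≠ 0 := by
  intro h
  have h2 := S1.abs_coe z
  rw [h] at h2; simp at h2

lemma theta_arcs {σ : Fin 4 → S1} {θ : Fin 4 → ℝ}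
    (he : ∀ k, (σ k : ℂ) = Complex.exp (θ k * Complex.I))
    (h01 : θ 0 < θ 1) (h12 : θ 1 < θ 2) (h23 : θ 2 < θ 3) (h30 : θ 3 < θ 0 + 2 * Real.pi) :
    ccwArc (σ 0 : ℂ) (σ 1 : ℂ) = θ 1 - θ 0 ∧
    ccwArc (σ 1 : ℂ) (σ 2 : ℂ) = θ 2 - θ 1 ∧
    ccwArc (σ 2 : ℂ) (σ 3 : ℂ) = θ 3 - θ 2 ∧
    ccwArc (σ 3 : ℂ) (σ 0 : ℂ) = θ 0 + 2 * Real.pi - θ 3 := by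
  rw [he 0, he 1, he 2, he 3]
  refine ⟨ccwArc_exp (by linarith) (by linarith),
          ccwArc_exp (by linarith) (by linarith),
          ccwArc_exp (by linarith) (by linarith), ?_⟩
  have h : Complex.exp ((θ 0 : ℝ) * Complex.I) = Complex.exp ((θ 0 + 2 * Real.pi : ℝ) * Complex.I) :=
    expI_eq_iff.2 ⟨-1, by push_cast; ring⟩
  rw [h]
  exact ccwArc_exp (by linarith) (by linarith)

lemma Lam_eq {σ : Fin 4 → S1} {θ : Fin 4 → ℝ}
    (he : ∀ k, (σ k : ℂ) = Complex.exp (θ k * Complex.I))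
    (h01 : θ 0 < θ 1) (h12 : θ 1 < θ 2) (h23 : θ 2 < θ 3) (h30 : θ 3 < θ 0 + 2 * Real.pi) :
    Lam σ = ((θ 1 - θ 0) + (θ 3 - θ 2)) / ((θ 2 - θ 1) + (θ 0 + 2 * Real.pi - θ 3)) := by
  obtain ⟨a0, a1, a2, a3⟩ := theta_arcs he h01 h12 h23 h30
  rw [Lam, a0, a1, a2, a3]

lemma Lam_pos {σ : Fin 4 → S1} (hσ : CCW4 σ) : 0 < Lam σ := by
  obtain ⟨θ, he, h01, h12, h23, h30⟩ := hσ
  rw [Lam_eq he h01 h12 h23 h30]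
  apply div_pos <;> linarith

lemma adj_ne {σ : Fin 4 → S1} (hσ : CCW4 σ) :
    σ 0 ≠ σ 1 ∧ σ 1 ≠ σ 2 ∧ σ 2 ≠ σ 3 ∧ σ 3 ≠ σ 0 := by
  obtain ⟨θ, he, h01, h12, h23, h30⟩ := hσ
  refine ⟨?_, ?_, ?_, ?_⟩ <;> intro h <;> apply_fun (fun z => (z : ℂ)) at h
  · rw [he 0, he 1] at h
    exact expI_ne_of_between (a := θ 0) (b := θ 1) (by linarith) (by linarith) h
  · rw [he 1, he 2] at h
    exact expI_ne_of_between (a := θ 1) (b := θ 2) (by linarith) (by linarith) h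
  · rw [he 2, he 3] at h
    exact expI_ne_of_between (a := θ 2) (b := θ 3) (by linarith) (by linarith) h
  · rw [he 3, he 0] at h
    exact expI_ne_of_between (a := θ 3) (b := θ 0 + 2 * Real.pi) (by linarith) (by linarith)
      (h.trans (expI_eq_iff.2 ⟨-1, by push_cast; ring⟩))

lemma continuousAt_ccwArc_pair {i j : Fin 4} {σ : Fin 4 → S1} (h : σ i ≠ σ j) :
    ContinuousAt (fun p : Fin 4 → S1 => ccwArc (p i : ℂ) (p j : ℂ)) σ := by
  have hfun : (fun p : Fin 4 → S1 => ccwArc (p i : ℂ) (p j : ℂ))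
      = (caux ∘ fun p : Fin 4 → S1 => ((p j : ℂ) / (p i : ℂ))) := rfl
  rw [hfun]
  have hdiv : ContinuousAt (fun p : Fin 4 → S1 => ((p j : ℂ) / (p i : ℂ))) σ := by
    apply ContinuousAt.div
    · exact (continuous_subtype_val.comp (continuous_apply j)).continuousAt
    · exact (continuous_subtype_val.comp (continuous_apply i)).continuousAt
    · exact S1.coe_ne_zero _
  apply ContinuousAt.comp _ hdiv
  apply continuousAt_caux
  apply mem_goodSet_of_circle
  · rw [norm_div, S1.abs_coe, S1.abs_coe]; norm_num
  · intro h1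
    rw [div_eq_one_iff_eq (S1.coe_ne_zero _)] at h1
    exact h (Subtype.ext h1.symm)

lemma continuousAt_Lam {σ : Fin 4 → S1} (hσ : CCW4 σ) : ContinuousAt Lam σ := by
  obtain ⟨h01, h12, h23, h30⟩ := adj_ne hσ
  have hL : Lam = fun p : Fin 4 → S1 =>
      (ccwArc (p 0 : ℂ) (p 1 : ℂ) + ccwArc (p 2 : ℂ) (p 3 : ℂ)) /
      (ccwArc (p 1 : ℂ) (p 2 : ℂ) + ccwArc (p 3 : ℂ) (p 0 : ℂ)) := rfl
  rw [hL]
  apply ContinuousAt.div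
  · exact (continuousAt_ccwArc_pair h01).add (continuousAt_ccwArc_pair h23)
  · exact (continuousAt_ccwArc_pair h12).add (continuousAt_ccwArc_pair h30)
  · obtain ⟨θ, he, g01, g12, g23, g30⟩ := hσ
    obtain ⟨a0, a1, a2, a3⟩ := theta_arcs he g01 g12 g23 g30
    rw [a1, a3]
    nlinarith

lemma CCW4.exists_norm {σ : Fin 4 → S1} (hσ : CCW4 σ) :
    ∃ θ : Fin 4 → ℝ,
      (∀ k, (σ k : ℂ) = Complex.exp (θ k * Complex.I)) ∧
      θ 0 < θ 1 ∧ θ 1 < θ 2 ∧ θ 2 < θ 3 ∧ θ 3 < θ 0 + 2 * Real.pi ∧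
      0 ≤ θ 0 ∧ θ 0 < 2 * Real.pi := by
  obtain ⟨θ, he, h01, h12, h23, h30⟩ := hσ
  have hpi := Real.pi_pos
  set c : ℤ := ⌊θ 0 / (2 * Real.pi)⌋ with hc
  refine ⟨fun k => θ k - c * (2 * Real.pi), ?_, by simpa using h01, by simpa using h12,
    by simpa using h23, by simp; linarith, ?_, ?_⟩
  · intro k
    rw [he k]
    exact expI_eq_iff.2 ⟨c, by push_cast; ring⟩
  · have h1 : (c : ℝ) ≤ θ 0 / (2 * Real.pi) := Int.floor_le _
    have h2 : (0:ℝ) < 2 * Real.pi := by linarith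
    have h3 : θ 0 / (2 * Real.pi) * (2 * Real.pi) = θ 0 := div_mul_cancel₀ _ (by linarith)
    simp only
    nlinarith [mul_le_mul_of_nonneg_right h1 h2.le]
  · have h1 : θ 0 / (2 * Real.pi) < c + 1 := Int.lt_floor_add_one _
    have h2 : (0:ℝ) < 2 * Real.pi := by linarith
    have h3 : θ 0 / (2 * Real.pi) * (2 * Real.pi) = θ 0 := div_mul_cancel₀ _ (by linarith)
    simp only
    nlinarith [mul_lt_mul_of_pos_right h1 h2]


lemma expI_window {s t : ℝ} (h : Complex.exp (s * Complex.I) = Complex.exp (t * Complex.I))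
    (h1 : 0 ≤ t - s) (h2 : t - s ≤ 2 * Real.pi) : t - s = 0 ∨ t - s = 2 * Real.pi := by
  have hpi := Real.pi_pos
  obtain ⟨n, hn⟩ := expI_eq_iff.1 h
  have hts : t - s = -n * (2 * Real.pi) := by rw [hn]; ring
  have hn0 : (0:ℝ) ≤ -n := by nlinarith
  have hn1 : (-n : ℝ) ≤ 1 := by nlinarith
  have hn0' : n ≤ 0 := by
    have : (0:ℤ) ≤ -n := by exact_mod_cast hn0
    omega
  have hn1' : (-1 : ℤ) ≤ n := by
    have : (-n : ℤ) ≤ 1 := by exact_mod_cast hn1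
    omega
  interval_cases n
  · right; rw [hts]; push_cast; ring
  · left; rw [hts]; push_cast; ring

lemma tendsto_expI {f : ℕ → ℝ} {t : ℝ} (h : Filter.Tendsto f atTop (nhds t)) :
    Filter.Tendsto (fun j => Complex.exp (f j * Complex.I)) atTop
      (nhds (Complex.exp (t * Complex.I))) := by
  apply (Complex.continuous_exp.tendsto _).comp
  exact ((Complex.continuous_ofReal.tendsto _).comp h).mul_const _

set_option maxHeartbeats 1000000 in
lemma lim_lemma (φn : ℕ → S1 → ℂ) (φ : S1 → ℂ)
    (hφc : Continuous φ) (hφi : Function.Injective φ)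
    (hunif : TendstoUniformly φn φ Filter.atTop)
    {x : ℕ → Fin 4 → S1} {σ : Fin 4 → S1} {ν : ℕ → ℕ} {a b : ℝ}
    (ha : 0 < a)
    (hccw : ∀ k, CCW4 (x k)) (hrect : ∀ k, IsLabeledRect (fun i => φn (ν k) (x k i)))
    (hlam : ∀ k, Lam (x k) ∈ Set.Icc a b)
    (hν : Filter.Tendsto ν Filter.atTop Filter.atTop)
    (hx : Filter.Tendsto x Filter.atTop (nhds σ)) :
    CCW4 σ ∧ IsLabeledRect (fun i => φ (σ i)) ∧ Lam σ ∈ Set.Icc a b := by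
  have hpi := Real.pi_pos
  -- normalized angles
  have hth : ∀ k, ∃ θ : Fin 4 → ℝ,
      (∀ i, (x k i : ℂ) = Complex.exp (θ i * Complex.I)) ∧
      θ 0 < θ 1 ∧ θ 1 < θ 2 ∧ θ 2 < θ 3 ∧ θ 3 < θ 0 + 2 * Real.pi ∧
      0 ≤ θ 0 ∧ θ 0 < 2 * Real.pi := fun k => CCW4.exists_norm (hccw k)
  choose θf hθe hθ01 hθ12 hθ23 hθ30 hθ0 hθ2π using hth
  -- compactness of the angle box
  have hbox : ∀ k, θf k ∈ Set.pi Set.univ (fun _ : Fin 4 => Set.Icc (0:ℝ) (4 * Real.pi)) := by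
    intro k
    intro i _
    have c01 := hθ01 k; have c12 := hθ12 k; have c23 := hθ23 k
    have c30 := hθ30 k; have c0 := hθ0 k; have c2 := hθ2π k
    have hi : i = 0 ∨ i = 1 ∨ i = 2 ∨ i = 3 := by omega
    rcases hi with rfl | rfl | rfl | rfl <;> exact ⟨by linarith, by linarith⟩
  obtain ⟨θs, -, u, hu, hθu⟩ :=
    (isCompact_univ_pi fun _ : Fin 4 => isCompact_Icc).tendsto_subseq hbox
  have hθui : ∀ i, Filter.Tendsto (fun j => θf (u j) i) Filter.atTop (nhds (θs i)) :=
    fun i => (tendsto_pi_nhds.1 hθu) i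
  -- component convergence of x
  have hxi : ∀ i, Filter.Tendsto (fun j => ((x (u j) i : ℂ))) Filter.atTop (nhds (σ i : ℂ)) := by
    intro i
    have h1 : Filter.Tendsto (fun k => x k i) Filter.atTop (nhds (σ i)) :=
      (tendsto_pi_nhds.1 hx) i
    exact ((continuous_subtype_val.tendsto _).comp (h1.comp hu.tendsto_atTop))
  -- σ i = exp(θs i * I)
  have hσe : ∀ i, (σ i : ℂ) = Complex.exp (θs i * Complex.I) := by
    intro i
    refine tendsto_nhds_unique (hxi i) ?_
    have := tendsto_expI (hθui i)
    apply this.congr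
    intro j
    exact (hθe (u j) i).symm
  -- weak limit inequalities
  have l01 : θs 0 ≤ θs 1 := le_of_tendsto_of_tendsto' (hθui 0) (hθui 1) (fun j => (hθ01 (u j)).le)
  have l12 : θs 1 ≤ θs 2 := le_of_tendsto_of_tendsto' (hθui 1) (hθui 2) (fun j => (hθ12 (u j)).le)
  have l23 : θs 2 ≤ θs 3 := le_of_tendsto_of_tendsto' (hθui 2) (hθui 3) (fun j => (hθ23 (u j)).le)
  have l30 : θs 3 ≤ θs 0 + 2 * Real.pi :=
    le_of_tendsto_of_tendsto' (hθui 3) ((hθui 0).add_const _) (fun j => (hθ30 (u j)).le)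
  set N : ℝ := (θs 1 - θs 0) + (θs 3 - θs 2) with hN
  set D : ℝ := (θs 2 - θs 1) + (θs 0 + 2 * Real.pi - θs 3) with hD
  have hND : N + D = 2 * Real.pi := by rw [hN, hD]; ring
  -- Lam bounds along the sequence
  have hlam' : ∀ j, a * ((θf (u j) 2 - θf (u j) 1) + (θf (u j) 0 + 2 * Real.pi - θf (u j) 3))
      ≤ (θf (u j) 1 - θf (u j) 0) + (θf (u j) 3 - θf (u j) 2) ∧
      (θf (u j) 1 - θf (u j) 0) + (θf (u j) 3 - θf (u j) 2)
      ≤ b * ((θf (u j) 2 - θf (u j) 1) + (θf (u j) 0 + 2 * Real.pi - θf (u j) 3)) := by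
    intro j
    have hle := hlam (u j)
    rw [Lam_eq (hθe (u j)) (hθ01 (u j)) (hθ12 (u j)) (hθ23 (u j)) (hθ30 (u j))] at hle
    have hdpos : 0 < (θf (u j) 2 - θf (u j) 1) + (θf (u j) 0 + 2 * Real.pi - θf (u j) 3) := by
      have := hθ12 (u j); have := hθ30 (u j); linarith
    obtain ⟨hle1, hle2⟩ := hle
    exact ⟨(le_div_iff₀ hdpos).1 hle1, (div_le_iff₀ hdpos).1 hle2⟩
  have hNt : Filter.Tendsto (fun j => (θf (u j) 1 - θf (u j) 0) + (θf (u j) 3 - θf (u j) 2))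
      Filter.atTop (nhds N) := (((hθui 1).sub (hθui 0)).add ((hθui 3).sub (hθui 2)))
  have hDt : Filter.Tendsto (fun j => (θf (u j) 2 - θf (u j) 1) + (θf (u j) 0 + 2 * Real.pi - θf (u j) 3))
      Filter.atTop (nhds D) := ((((hθui 2).sub (hθui 1))).add (((hθui 0).add_const _).sub (hθui 3)))
  have hND1 : a * D ≤ N :=
    le_of_tendsto_of_tendsto' (hDt.const_mul a) hNt (fun j => (hlam' j).1)
  have hND2 : N ≤ b * D :=
    le_of_tendsto_of_tendsto' hNt (hDt.const_mul b) (fun j => (hlam' j).2)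
  have hN0 : 0 ≤ N := by rw [hN]; linarith
  have hD0 : 0 ≤ D := by rw [hD]; linarith
  have hDpos : 0 < D := by
    rcases hD0.lt_or_eq with h | h
    · exact h
    · exfalso
      have hD' : D = 0 := h.symm
      have h1 : N ≤ 0 := by
        calc N ≤ b * D := hND2
          _ = 0 := by rw [hD']; ring
      linarith
  have hNpos : 0 < N := by
    rcases hN0.lt_or_eq with h | h
    · exact h
    · exfalso
      have hN' : N = 0 := h.symm
      have hD' : D = 2 * Real.pi := by linarith
      have h1 : 0 < a * D := mul_pos ha (by rw [hD']; linarith)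
      linarith
  -- convergence of the rectangles
  have hRlim : ∀ i, Filter.Tendsto (fun j => φn (ν (u j)) (x (u j) i)) Filter.atTop
      (nhds (φ (σ i))) := by
    intro i
    have hunif2 : TendstoUniformly (fun j => φn (ν (u j))) φ Filter.atTop := by
      intro s hs
      exact ((hν.comp hu.tendsto_atTop)).eventually (hunif s hs)
    exact hunif2.tendsto_comp hφc.continuousAt
      ((tendsto_pi_nhds.1 (hx.comp hu.tendsto_atTop)) i)
  -- differences from the rectangle equations
  have hrect' : ∀ j, IsLabeledRect (fun i => φn (ν (u j)) (x (u j) i)) := fun j => hrect (u j)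
  -- helper to pass equalities of S1 points through exp
  have key_sig : ∀ i i' : Fin 4, σ i = σ i' → 0 ≤ θs i' - θs i → θs i' - θs i ≤ 2 * Real.pi →
      θs i' - θs i = 0 ∨ θs i' - θs i = 2 * Real.pi := by
    intro i i' hσii h0 h2
    have he : Complex.exp (θs i * Complex.I) = Complex.exp (θs i' * Complex.I) := by
      rw [← hσe i, ← hσe i', hσii]
    exact expI_window he h0 h2
  -- rectangle algebra along the sequence
  have he2 : ∀ j, φn (ν (u j)) (x (u j) 3)
      = φn (ν (u j)) (x (u j) 0) + (φn (ν (u j)) (x (u j) 2) - φn (ν (u j)) (x (u j) 1)) :=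
    fun j => (hrect' j).2.choose_spec.2.2
  have hsub32 : ∀ j, φn (ν (u j)) (x (u j) 3) - φn (ν (u j)) (x (u j) 2)
      = φn (ν (u j)) (x (u j) 0) - φn (ν (u j)) (x (u j) 1) := by
    intro j; rw [he2 j]; ring
  have hsub30 : ∀ j, φn (ν (u j)) (x (u j) 3) - φn (ν (u j)) (x (u j) 0)
      = φn (ν (u j)) (x (u j) 2) - φn (ν (u j)) (x (u j) 1) := by
    intro j; rw [he2 j]; ring
  have hbound : (θs 1 - θs 0) ≤ 2 * Real.pi ∧ (θs 2 - θs 1) ≤ 2 * Real.pi ∧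
      (θs 3 - θs 2) ≤ 2 * Real.pi ∧ (θs 3 - θs 0) ≤ 2 * Real.pi := by
    refine ⟨by linarith, by linarith, by linarith, by linarith⟩
  -- the four strictness claims
  have hstrict01 : θs 0 < θs 1 := by
    rcases l01.lt_or_eq with h | h
    · exact h
    · exfalso
      have hσ01 : σ 0 = σ 1 := Subtype.ext (by rw [hσe 0, hσe 1, h])
      have hlim1 : Filter.Tendsto (fun j => φn (ν (u j)) (x (u j) 3) - φn (ν (u j)) (x (u j) 2))
          Filter.atTop (nhds (φ (σ 3) - φ (σ 2))) := (hRlim 3).sub (hRlim 2)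
      have hlim2 : Filter.Tendsto (fun j => φn (ν (u j)) (x (u j) 3) - φn (ν (u j)) (x (u j) 2))
          Filter.atTop (nhds (φ (σ 0) - φ (σ 1))) := by
        apply ((hRlim 0).sub (hRlim 1)).congr
        intro j; exact (hsub32 j).symm
      have hz : φ (σ 3) - φ (σ 2) = φ (σ 0) - φ (σ 1) := tendsto_nhds_unique hlim1 hlim2
      rw [hσ01, sub_self] at hz
      have hσ23 : σ 2 = σ 3 := (hφi (sub_eq_zero.1 hz)).symm
      have := key_sig 2 3 hσ23 (by linarith) hbound.2.2.1
      rcases this with h' | h' <;> linarith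
  have hstrict23 : θs 2 < θs 3 := by
    rcases l23.lt_or_eq with h | h
    · exact h
    · exfalso
      have hσ23 : σ 2 = σ 3 := Subtype.ext (by rw [hσe 2, hσe 3, h])
      have hlim1 : Filter.Tendsto (fun j => φn (ν (u j)) (x (u j) 3) - φn (ν (u j)) (x (u j) 2))
          Filter.atTop (nhds (φ (σ 3) - φ (σ 2))) := (hRlim 3).sub (hRlim 2)
      have hlim2 : Filter.Tendsto (fun j => φn (ν (u j)) (x (u j) 3) - φn (ν (u j)) (x (u j) 2))
          Filter.atTop (nhds (φ (σ 0) - φ (σ 1))) := by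
        apply ((hRlim 0).sub (hRlim 1)).congr
        intro j; exact (hsub32 j).symm
      have hz : φ (σ 3) - φ (σ 2) = φ (σ 0) - φ (σ 1) := tendsto_nhds_unique hlim1 hlim2
      rw [hσ23, sub_self] at hz
      have hσ01 : σ 0 = σ 1 := hφi (sub_eq_zero.1 hz.symm)
      have := key_sig 0 1 hσ01 (by linarith) hbound.1
      rcases this with h' | h' <;> linarith
  have hstrict12 : θs 1 < θs 2 := by
    rcases l12.lt_or_eq with h | h
    · exact h
    · exfalso
      have hσ12 : σ 1 = σ 2 := Subtype.ext (by rw [hσe 1, hσe 2, h])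
      have hlim1 : Filter.Tendsto (fun j => φn (ν (u j)) (x (u j) 3) - φn (ν (u j)) (x (u j) 0))
          Filter.atTop (nhds (φ (σ 3) - φ (σ 0))) := (hRlim 3).sub (hRlim 0)
      have hlim2 : Filter.Tendsto (fun j => φn (ν (u j)) (x (u j) 3) - φn (ν (u j)) (x (u j) 0))
          Filter.atTop (nhds (φ (σ 2) - φ (σ 1))) := by
        apply ((hRlim 2).sub (hRlim 1)).congr
        intro j; exact (hsub30 j).symm
      have hz : φ (σ 3) - φ (σ 0) = φ (σ 2) - φ (σ 1) := tendsto_nhds_unique hlim1 hlim2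
      rw [hσ12, sub_self] at hz
      have hσ03 : σ 0 = σ 3 := (hφi (sub_eq_zero.1 hz)).symm
      have := key_sig 0 3 hσ03 (by linarith) hbound.2.2.2
      rcases this with h' | h' <;> linarith
  have hstrict30 : θs 3 < θs 0 + 2 * Real.pi := by
    rcases l30.lt_or_eq with h | h
    · exact h
    · exfalso
      have hσ30 : σ 3 = σ 0 := by
        apply Subtype.ext
        rw [hσe 3, hσe 0, h]
        exact expI_eq_iff.2 ⟨1, by push_cast; ring⟩
      have hlim1 : Filter.Tendsto (fun j => φn (ν (u j)) (x (u j) 3) - φn (ν (u j)) (x (u j) 0))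
          Filter.atTop (nhds (φ (σ 3) - φ (σ 0))) := (hRlim 3).sub (hRlim 0)
      have hlim2 : Filter.Tendsto (fun j => φn (ν (u j)) (x (u j) 3) - φn (ν (u j)) (x (u j) 0))
          Filter.atTop (nhds (φ (σ 2) - φ (σ 1))) := by
        apply ((hRlim 2).sub (hRlim 1)).congr
        intro j; exact (hsub30 j).symm
      have hz : φ (σ 3) - φ (σ 0) = φ (σ 2) - φ (σ 1) := tendsto_nhds_unique hlim1 hlim2
      rw [hσ30, sub_self] at hz
      have hσ12 : σ 1 = σ 2 := (hφi (sub_eq_zero.1 hz.symm)).symm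
      have := key_sig 1 2 hσ12 (by linarith) hbound.2.1
      rcases this with h' | h' <;> linarith
  have hccwσ : CCW4 σ := ⟨θs, hσe, hstrict01, hstrict12, hstrict23, hstrict30⟩
  refine ⟨hccwσ, ?_, ?_⟩
  · -- limit is a labeled rectangle
    obtain ⟨hne01, hne12, hne23, hne30⟩ := adj_ne hccwσ
    have hRne : φ (σ 1) ≠ φ (σ 0) := fun h => hne01 (hφi h.symm)
    have hRne12 : φ (σ 2) ≠ φ (σ 1) := fun h => hne12 (hφi h.symm)
    have habs10 : ‖φ (σ 1) - φ (σ 0)‖ ≠ 0 :=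
      norm_ne_zero_iff.2 (sub_ne_zero.2 hRne)
    have hr : ∀ j, ∃ r : ℝ, 0 < r ∧
        φn (ν (u j)) (x (u j) 2) - φn (ν (u j)) (x (u j) 1)
          = Complex.I * r * (φn (ν (u j)) (x (u j) 1) - φn (ν (u j)) (x (u j) 0)) ∧
        φn (ν (u j)) (x (u j) 3)
          = φn (ν (u j)) (x (u j) 0) + (φn (ν (u j)) (x (u j) 2) - φn (ν (u j)) (x (u j) 1)) :=
      fun j => (hrect' j).2
    choose r hrpos hre1 hre2 using hr
    have hrne : ∀ j, φn (ν (u j)) (x (u j) 1) ≠ φn (ν (u j)) (x (u j) 0) := fun j => (hrect' j).1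
    have hreq : ∀ j, r j = ‖φn (ν (u j)) (x (u j) 2) - φn (ν (u j)) (x (u j) 1)‖ /
        ‖φn (ν (u j)) (x (u j) 1) - φn (ν (u j)) (x (u j) 0)‖ := by
      intro j
      rw [hre1 j]
      rw [norm_mul, norm_mul, Complex.norm_I, Complex.norm_real, Real.norm_eq_abs, one_mul,
        _root_.abs_of_pos (hrpos j)]
      rw [mul_div_assoc, div_self (norm_ne_zero_iff.2 (sub_ne_zero.2 (hrne j))), mul_one]
    set rs : ℝ := ‖φ (σ 2) - φ (σ 1)‖ / ‖φ (σ 1) - φ (σ 0)‖ with hrs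
    have hrt : Filter.Tendsto r Filter.atTop (nhds rs) := by
      have h1 : Filter.Tendsto (fun j => ‖φn (ν (u j)) (x (u j) 2)
          - φn (ν (u j)) (x (u j) 1)‖) Filter.atTop (nhds ‖φ (σ 2) - φ (σ 1)‖) :=
        (continuous_norm.tendsto _).comp ((hRlim 2).sub (hRlim 1))
      have h2 : Filter.Tendsto (fun j => ‖φn (ν (u j)) (x (u j) 1)
          - φn (ν (u j)) (x (u j) 0)‖) Filter.atTop (nhds ‖φ (σ 1) - φ (σ 0)‖) :=
        (continuous_norm.tendsto _).comp ((hRlim 1).sub (hRlim 0))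
      have := h1.div h2 habs10
      apply this.congr
      intro j; exact (hreq j).symm
    have hrspos : 0 < rs := by
      apply div_pos
      · rw [norm_pos_iff, sub_ne_zero]; exact hRne12
      · rw [norm_pos_iff, sub_ne_zero]; exact hRne
    refine ⟨hRne, rs, hrspos, ?_, ?_⟩
    · have hlhs : Filter.Tendsto (fun j => φn (ν (u j)) (x (u j) 2) - φn (ν (u j)) (x (u j) 1))
          Filter.atTop (nhds (φ (σ 2) - φ (σ 1))) := (hRlim 2).sub (hRlim 1)
      have hrhs : Filter.Tendsto (fun j => φn (ν (u j)) (x (u j) 2) - φn (ν (u j)) (x (u j) 1))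
          Filter.atTop (nhds (Complex.I * rs * (φ (σ 1) - φ (σ 0)))) := by
        have hrc : Filter.Tendsto (fun j => (r j : ℂ)) Filter.atTop (nhds (rs : ℂ)) :=
          (Complex.continuous_ofReal.tendsto _).comp hrt
        have := (tendsto_const_nhds (x := Complex.I)).mul hrc |>.mul ((hRlim 1).sub (hRlim 0))
        apply this.congr
        intro j; exact (hre1 j).symm
      exact tendsto_nhds_unique hlhs hrhs
    · have hlhs : Filter.Tendsto (fun j => φn (ν (u j)) (x (u j) 3))
          Filter.atTop (nhds (φ (σ 3))) := hRlim 3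
      have hrhs : Filter.Tendsto (fun j => φn (ν (u j)) (x (u j) 3))
          Filter.atTop (nhds (φ (σ 0) + (φ (σ 2) - φ (σ 1)))) := by
        have := (hRlim 0).add ((hRlim 2).sub (hRlim 1))
        apply this.congr
        intro j; exact (hre2 j).symm
      exact tendsto_nhds_unique hlhs hrhs
  · -- Lam σ ∈ Icc a b
    have hLt : Filter.Tendsto (fun j => Lam (x (u j))) Filter.atTop (nhds (Lam σ)) :=
      (continuousAt_Lam hccwσ).tendsto.comp (hx.comp hu.tendsto_atTop)
    exact isClosed_Icc.mem_of_tendsto hLt (Filter.Eventually.of_forall fun j => hlam (u j))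


lemma clopen_sep {T : Type} [TopologicalSpace T] [CompactSpace T] [T2Space T] {t : T} {B : Set T}
    (hB : IsClosed B) (hdisj : connectedComponent t ∩ B = ∅) :
    ∃ V : Set T, IsClopen V ∧ t ∈ V ∧ V ∩ B = ∅ := by
  have hcc := connectedComponent_eq_iInter_isClopen t
  have hBc : IsCompact B := hB.isCompact
  have hint : B ∩ ⋂ (s : {s : Set T // IsClopen s ∧ t ∈ s}), s.1 = ∅ := by
    rw [← hcc, Set.inter_comm]; exact hdisj
  obtain ⟨u, hu⟩ := hBc.elim_finite_subfamily_closed _ (fun s => s.2.1.1) hint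
  refine ⟨⋂ i ∈ u, i.1, ?_, ?_, ?_⟩
  · exact isClopen_biInter_finset (fun i _ => i.2.1)
  · exact Set.mem_biInter (fun i _ => i.2.2)
  · rw [Set.inter_comm]; exact hu

lemma strip_lemma {α : Type} [TopologicalSpace α] [T2Space α] {C : Set α} {f : α → ℝ}
    (hC : IsCompact C) (hCconn : IsPreconnected C) (hf : ContinuousOn f C)
    {a b : ℝ} (hab : a < b) (hfa : ∃ x ∈ C, f x ≤ a) (hfb : ∃ x ∈ C, b ≤ f x) :
    ∃ K : Set α, K ⊆ C ∧ (∀ x ∈ K, f x ∈ Set.Icc a b) ∧ IsCompact K ∧ IsPreconnected K ∧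
      (∃ x ∈ K, f x = a) ∧ (∃ x ∈ K, f x = b) := by
  obtain ⟨x1, hx1, hx1'⟩ := hfa
  obtain ⟨x2, hx2, hx2'⟩ := hfb
  have hivt := hCconn.intermediate_value hx1 hx2 hf
  obtain ⟨pa, hpaC, hpa⟩ : ∃ pa ∈ C, f pa = a := by
    obtain ⟨pa, h1, h2⟩ := hivt ⟨hx1', by linarith⟩
    exact ⟨pa, h1, h2⟩
  obtain ⟨pb, hpbC, hpb⟩ : ∃ pb ∈ C, f pb = b := by
    obtain ⟨pb, h1, h2⟩ := hivt ⟨by linarith, hx2'⟩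
    exact ⟨pb, h1, h2⟩
  set Q : Set α := C ∩ f ⁻¹' (Set.Icc a b) with hQdef
  have hQclosed : IsClosed Q := hf.preimage_isClosed_of_isClosed hC.isClosed isClosed_Icc
  have hQ : IsCompact Q := hC.of_isClosed_subset hQclosed Set.inter_subset_left
  haveI : CompactSpace ↥Q := isCompact_iff_compactSpace.1 hQ
  have hfQ : Continuous (Q.restrict f) := (hf.mono Set.inter_subset_left).restrict
  set A' : Set ↥Q := Q.restrict f ⁻¹' {a} with hA'def
  set B' : Set ↥Q := Q.restrict f ⁻¹' {b} with hB'def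
  have hA'closed : IsClosed A' := isClosed_singleton.preimage hfQ
  have hB'closed : IsClosed B' := isClosed_singleton.preimage hfQ
  by_contra hcon
  push_neg at hcon
  have hcomp : ∀ q : ↥Q, connectedComponent q ∩ A' = ∅ ∨ connectedComponent q ∩ B' = ∅ := by
    intro q
    by_contra hq
    push_neg at hq
    obtain ⟨hqa, hqb⟩ := hq
    obtain ⟨ta, hta, hta'⟩ := hqa
    obtain ⟨tb, htb, htb'⟩ := hqb
    set K : Set α := Subtype.val '' connectedComponent q with hKdef
    have hKC : K ⊆ C := by
      rintro x ⟨t, _, rfl⟩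
      exact t.2.1
    have hKicc : ∀ x ∈ K, f x ∈ Set.Icc a b := by
      rintro x ⟨t, _, rfl⟩
      exact t.2.2
    have hKcomp : IsCompact K :=
      (isClosed_connectedComponent.isCompact).image continuous_subtype_val
    have hKconn : IsPreconnected K :=
      isPreconnected_connectedComponent.image _ continuous_subtype_val.continuousOn
    exact hcon K hKC hKicc hKcomp hKconn ⟨ta.1, Set.mem_image_of_mem _ hta, hta'⟩
      tb.1 (Set.mem_image_of_mem _ htb) htb'
  have hV : ∀ q : ↥Q, ∃ V : Set ↥Q, IsClopen V ∧ q ∈ V ∧ (V ∩ A' = ∅ ∨ V ∩ B' = ∅) := by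
    intro q
    rcases hcomp q with h | h
    · obtain ⟨V, h1, h2, h3⟩ := clopen_sep hA'closed h
      exact ⟨V, h1, h2, Or.inl h3⟩
    · obtain ⟨V, h1, h2, h3⟩ := clopen_sep hB'closed h
      exact ⟨V, h1, h2, Or.inr h3⟩
  choose V hVclopen hVmem hVside using hV
  obtain ⟨s, hs⟩ := isCompact_univ.elim_finite_subcover V (fun q => (hVclopen q).2)
    (fun q _ => Set.mem_iUnion.2 ⟨q, hVmem q⟩)
  classical
  set U : Set ↥Q := ⋃ q ∈ s, if V q ∩ B' = ∅ then V q else ∅ with hUdef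
  have hUclopen : IsClopen U := by
    apply isClopen_biUnion_finset
    intro q _
    split
    · exact hVclopen q
    · exact isClopen_empty
  have hUB : U ∩ B' = ∅ := by
    apply Set.eq_empty_iff_forall_notMem.2
    rintro t ⟨htU, htB⟩
    obtain ⟨q, hqs, htq⟩ := Set.mem_iUnion₂.1 htU
    by_cases hcase : V q ∩ B' = ∅
    · rw [if_pos hcase] at htq
      exact Set.eq_empty_iff_forall_notMem.1 hcase t ⟨htq, htB⟩
    · rw [if_neg hcase] at htq
      exact htq
  have hAU : A' ⊆ U := by
    intro t htA
    have := hs (Set.mem_univ t)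
    obtain ⟨q, hqs, htq⟩ := Set.mem_iUnion₂.1 this
    rcases hVside q with h | h
    · exact absurd (Set.eq_empty_iff_forall_notMem.1 h t ⟨htq, htA⟩) (fun h => h)
    · exact Set.mem_iUnion₂.2 ⟨q, hqs, by rw [if_pos h]; exact htq⟩
  -- transfer to α
  set Us : Set α := Subtype.val '' U with hUsdef
  set Ws : Set α := Subtype.val '' Uᶜ with hWsdef
  have hUsclosed : IsClosed Us :=
    ((hUclopen.1.isCompact).image continuous_subtype_val).isClosed
  have hWsclosed : IsClosed Ws :=
    ((hUclopen.2.isClosed_compl.isCompact).image continuous_subtype_val).isClosed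
  set S1 : Set α := (C ∩ f ⁻¹' Set.Iic a) ∪ Us with hS1def
  set S2 : Set α := (C ∩ f ⁻¹' Set.Ici b) ∪ Ws with hS2def
  have hS1closed : IsClosed S1 :=
    (hf.preimage_isClosed_of_isClosed hC.isClosed isClosed_Iic).union hUsclosed
  have hS2closed : IsClosed S2 :=
    (hf.preimage_isClosed_of_isClosed hC.isClosed isClosed_Ici).union hWsclosed
  have hcover : C ⊆ S1 ∪ S2 := by
    intro x hx
    rcases le_or_gt (f x) a with h | h
    · exact Or.inl (Or.inl ⟨hx, h⟩)
    rcases le_or_gt b (f x) with h' | h'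
    · exact Or.inr (Or.inl ⟨hx, h'⟩)
    · have hxQ : x ∈ Q := ⟨hx, h.le, h'.le⟩
      by_cases hU : (⟨x, hxQ⟩ : ↥Q) ∈ U
      · exact Or.inl (Or.inr ⟨⟨x, hxQ⟩, hU, rfl⟩)
      · exact Or.inr (Or.inr ⟨⟨x, hxQ⟩, hU, rfl⟩)
  have hdisj : C ∩ (S1 ∩ S2) = ∅ := by
    apply Set.eq_empty_iff_forall_notMem.2
    rintro x ⟨hxC, hx1, hx2⟩
    rcases hx1 with ⟨-, h1⟩ | ⟨t1, ht1, hval1⟩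
    · rcases hx2 with ⟨-, h2⟩ | ⟨t2, ht2, hval2⟩
      · rw [Set.mem_preimage, Set.mem_Iic] at h1
        rw [Set.mem_preimage, Set.mem_Ici] at h2
        linarith
      · rw [Set.mem_preimage, Set.mem_Iic] at h1
        have hge : a ≤ f x := by
          rw [← hval2]; exact t2.2.2.1
        have htA : t2 ∈ A' := by
          show Q.restrict f t2 ∈ ({a} : Set ℝ)
          rw [Set.mem_singleton_iff]
          show f t2.1 = a
          rw [hval2]; linarith
        exact ht2 (hAU htA)
    · rcases hx2 with ⟨-, h2⟩ | ⟨t2, ht2, hval2⟩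
      · rw [Set.mem_preimage, Set.mem_Ici] at h2
        have hle : f x ≤ b := by
          rw [← hval1]; exact t1.2.2.2
        have htB : t1 ∈ B' := by
          show Q.restrict f t1 ∈ ({b} : Set ℝ)
          rw [Set.mem_singleton_iff]
          show f t1.1 = b
          rw [hval1]; linarith
        exact Set.eq_empty_iff_forall_notMem.1 hUB t1 ⟨ht1, htB⟩
      · have heq : t1 = t2 := Subtype.ext (by rw [hval1, hval2])
        exact ht2 (heq ▸ ht1)
  rcases isPreconnected_iff_subset_of_disjoint_closed.1 hCconn S1 S2 hS1closed hS2closed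
      hcover hdisj with h | h
  · rcases h hpbC with ⟨-, h2⟩ | ⟨t, htU, hval⟩
    · rw [Set.mem_preimage, Set.mem_Iic, hpb] at h2
      linarith
    · have htB : t ∈ B' := by
        show Q.restrict f t ∈ ({b} : Set ℝ)
        rw [Set.mem_singleton_iff]
        show f t.1 = b
        rw [hval]; exact hpb
      exact Set.eq_empty_iff_forall_notMem.1 hUB t ⟨htU, htB⟩
  · rcases h hpaC with ⟨-, h2⟩ | ⟨t, htW, hval⟩
    · rw [Set.mem_preimage, Set.mem_Ici, hpa] at h2
      linarith
    · have htA : t ∈ A' := by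
        show Q.restrict f t ∈ ({a} : Set ℝ)
        rw [Set.mem_singleton_iff]
        show f t.1 = a
        rw [hval]; exact hpa
      exact htW (hAU htA)


def lsSet {α : Type} [TopologicalSpace α] (T : ℕ → Set α) : Set α :=
  ⋂ J : ℕ, closure (⋃ j ∈ Set.Ici J, T j)

lemma isClosed_lsSet {α : Type} [TopologicalSpace α] (T : ℕ → Set α) : IsClosed (lsSet T) :=
  isClosed_iInter fun _ => isClosed_closure

lemma mem_lsSet_of_seq {α : Type} [MetricSpace α] {T : ℕ → Set α} {x : α}
    {j : ℕ → ℕ} {y : ℕ → α} (hj : ∀ k, k ≤ j k) (hy : ∀ k, y k ∈ T (j k))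
    (hyx : Filter.Tendsto y Filter.atTop (nhds x)) : x ∈ lsSet T := by
  apply Set.mem_iInter.2
  intro J
  apply mem_closure_of_tendsto hyx
  filter_upwards [Filter.eventually_ge_atTop J] with k hk
  exact Set.mem_biUnion (Set.mem_Ici.2 (le_trans hk (hj k))) (hy k)

lemma lsSet_spec {α : Type} [MetricSpace α] {T : ℕ → Set α} {x : α} (hx : x ∈ lsSet T) :
    ∀ (J : ℕ) (ε : ℝ), 0 < ε → ∃ j, J ≤ j ∧ ∃ y ∈ T j, dist y x < ε := by
  intro J ε hε
  have h1 := Set.mem_iInter.1 hx J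
  obtain ⟨y, hy, hd⟩ := Metric.mem_closure_iff.1 h1 ε hε
  obtain ⟨j, hj, hyT⟩ := Set.mem_iUnion₂.1 hy
  exact ⟨j, hj, y, hyT, by rw [dist_comm]; exact hd⟩

lemma lsSet_exists_seq {α : Type} [MetricSpace α] {T : ℕ → Set α} {x : α} (hx : x ∈ lsSet T) :
    ∃ (j : ℕ → ℕ) (y : ℕ → α), (∀ k, k ≤ j k) ∧ (∀ k, y k ∈ T (j k)) ∧
      Filter.Tendsto y Filter.atTop (nhds x) := by
  have h : ∀ k : ℕ, ∃ j, k ≤ j ∧ ∃ y ∈ T j, dist y x < 1 / (k + 1) :=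
    fun k => lsSet_spec hx k (1 / (k + 1)) (by positivity)
  choose j hj y hy hd using h
  refine ⟨j, y, hj, hy, ?_⟩
  rw [Metric.tendsto_atTop]
  intro ε hε
  obtain ⟨N, hN⟩ := exists_nat_one_div_lt hε
  refine ⟨N, fun k hk => ?_⟩
  calc dist (y k) x < 1 / (k + 1) := hd k
    _ ≤ 1 / (N + 1) := by
        apply one_div_le_one_div_of_le (by positivity)
        exact_mod_cast Nat.succ_le_succ hk
    _ < ε := hN

lemma lsSet_preconnected {α : Type} [MetricSpace α] [CompactSpace α]
    {T : ℕ → Set α} (hTconn : ∀ j, IsPreconnected (T j))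
    {t : ℕ → α} (ht : ∀ j, t j ∈ T j) {σ : α}
    (htσ : Filter.Tendsto t Filter.atTop (nhds σ)) :
    σ ∈ lsSet T ∧ IsPreconnected (lsSet T) := by
  have hσmem : σ ∈ lsSet T := mem_lsSet_of_seq (fun k => le_refl k) ht htσ
  refine ⟨hσmem, ?_⟩
  set K := lsSet T with hK
  have hKclosed : IsClosed K := isClosed_lsSet T
  intro u v hu hv hcover hKu hKv
  by_contra hcontra
  have hempty : K ∩ (u ∩ v) = ∅ := Set.not_nonempty_iff_eq_empty.1 hcontra
  set E : Set α := K \ v with hE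
  set F : Set α := K \ u with hF
  have hEclosed : IsClosed E := hKclosed.sdiff hv
  have hFclosed : IsClosed F := hKclosed.sdiff hu
  have hEF : Disjoint E F := by
    rw [Set.disjoint_iff_inter_eq_empty]
    apply Set.eq_empty_iff_forall_notMem.2
    rintro p ⟨⟨hpK, hpv⟩, ⟨_, hpu⟩⟩
    rcases hcover hpK with h | h
    · exact hpu h
    · exact hpv h
  have hKEF : K ⊆ E ∪ F := by
    intro p hp
    by_cases hpu : p ∈ u
    · left
      refine ⟨hp, fun hpv => ?_⟩
      exact Set.eq_empty_iff_forall_notMem.1 hempty p ⟨hp, hpu, hpv⟩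
    · right; exact ⟨hp, hpu⟩
  have hEne : E.Nonempty := by
    obtain ⟨p, hpK, hpu⟩ := hKu
    exact ⟨p, hpK, fun hpv => Set.eq_empty_iff_forall_notMem.1 hempty p ⟨hpK, hpu, hpv⟩⟩
  have hFne : F.Nonempty := by
    obtain ⟨p, hpK, hpv⟩ := hKv
    exact ⟨p, hpK, fun hpu => Set.eq_empty_iff_forall_notMem.1 hempty p ⟨hpK, hpu, hpv⟩⟩
  obtain ⟨δ, hδ, hdisj⟩ := hEF.exists_thickenings hEclosed.isCompact hFclosed
  have hmain : ∀ (E' F' : Set α), IsClosed E' → σ ∈ E' → F'.Nonempty →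
      F' ⊆ K → K ⊆ E' ∪ F' →
      Disjoint (Metric.thickening δ E') (Metric.thickening δ F') → False := by
    intro E' F' hE'c hσE hF'ne hF'K hKEF' hdisj'
    obtain ⟨w, hw⟩ := hF'ne
    have hthEopen : IsOpen (Metric.thickening δ E') := Metric.isOpen_thickening
    have hthFopen : IsOpen (Metric.thickening δ F') := Metric.isOpen_thickening
    have hσnear : ∀ᶠ jj in Filter.atTop, t jj ∈ Metric.thickening δ E' := by
      have hmem : Metric.thickening δ E' ∈ nhds σ :=
        hthEopen.mem_nhds (Metric.self_subset_thickening hδ E' hσE)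
      exact htσ hmem
    obtain ⟨N, hN⟩ := Filter.eventually_atTop.1 hσnear
    have hz : ∀ k : ℕ, ∃ j, k ≤ j ∧ ∃ z ∈ T j,
        z ∉ Metric.thickening δ E' ∪ Metric.thickening δ F' := by
      intro k
      obtain ⟨j, hjge, y, hyT, hyd⟩ := lsSet_spec (hF'K hw) (max k N) δ hδ
      have hjk : k ≤ j := le_trans (le_max_left _ _) hjge
      have hjN : N ≤ j := le_trans (le_max_right _ _) hjge
      have htj : t j ∈ Metric.thickening δ E' := hN j hjN
      have hyF : y ∈ Metric.thickening δ F' := Metric.mem_thickening_iff.2 ⟨w, hw, hyd⟩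
      by_contra hcon2
      push_neg at hcon2
      have hsub : T j ⊆ Metric.thickening δ E' ∪ Metric.thickening δ F' := by
        intro z hzT
        by_contra hznot
        exact hznot (hcon2 j hjk z hzT)
      obtain ⟨p, _, hp⟩ := hTconn j _ _ hthEopen hthFopen hsub ⟨t j, ht j, htj⟩ ⟨y, hyT, hyF⟩
      exact Set.disjoint_iff_inter_eq_empty.1 hdisj' |>.subset hp |>.elim
    choose jf hjf z hzT hznot using hz
    obtain ⟨zs, uu, huu, hzt⟩ := CompactSpace.tendsto_subseq z
    have hzsK : zs ∈ K := by
      apply mem_lsSet_of_seq (j := fun k => jf (uu k)) (y := fun k => z (uu k))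
      · intro k
        exact le_trans (le_trans huu.le_apply (hjf (uu k))) (le_refl _)
      · intro k
        exact hzT (uu k)
      · exact hzt
    have hzsnot : zs ∉ Metric.thickening δ E' ∪ Metric.thickening δ F' := by
      have hclosed : IsClosed (Metric.thickening δ E' ∪ Metric.thickening δ F')ᶜ :=
        (hthEopen.union hthFopen).isClosed_compl
      have := hclosed.mem_of_tendsto hzt
        (Filter.Eventually.of_forall fun k => hznot (uu k))
      exact this
    rcases hKEF' hzsK with h | h
    · exact hzsnot (Or.inl (Metric.self_subset_thickening hδ E' h))
    · exact hzsnot (Or.inr (Metric.self_subset_thickening hδ F' h))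
  rcases hKEF hσmem with hσE | hσF
  · exact (hmain E F hEclosed hσE hFne Set.diff_subset hKEF hdisj).elim
  · exact (hmain F E hFclosed hσF hEne Set.diff_subset
      (by rw [Set.union_comm]; exact hKEF) hdisj.symm).elim


def GoodW (R : Set (Fin 4 → S1)) (m : ℕ) (S : Set (Fin 4 → S1)) : Prop :=
  S ⊆ R ∧ IsCompact S ∧ IsPreconnected S ∧
  (∀ x ∈ S, Lam x ∈ Set.Icc ((m : ℝ) + 1)⁻¹ ((m : ℝ) + 1)) ∧
  (∃ x ∈ S, Lam x = ((m : ℝ) + 1)⁻¹) ∧ (∃ x ∈ S, Lam x = ((m : ℝ) + 1))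

lemma GoodW.continuousOn {R : Set (Fin 4 → S1)} (hR : R ⊆ {σ | CCW4 σ}) {m : ℕ}
    {S : Set (Fin 4 → S1)} (h : GoodW R m S) : ContinuousOn Lam S :=
  fun x hx => (continuousAt_Lam (hR (h.1 hx))).continuousWithinAt

lemma GoodW.surj {R : Set (Fin 4 → S1)} (hR : R ⊆ {σ | CCW4 σ}) {m : ℕ}
    {S : Set (Fin 4 → S1)} (h : GoodW R m S) {l : ℝ}
    (hl : l ∈ Set.Icc ((m : ℝ) + 1)⁻¹ ((m : ℝ) + 1)) : ∃ x ∈ S, Lam x = l := by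
  obtain ⟨hsub, hcomp, hconn, hbd, ⟨xa, hxa, hxa'⟩, ⟨xb, hxb, hxb'⟩⟩ := h
  have hcont : ContinuousOn Lam S :=
    fun x hx => (continuousAt_Lam (hR (hsub hx))).continuousWithinAt
  have hl' : l ∈ Set.Icc (Lam xa) (Lam xb) := by rw [hxa', hxb']; exact hl
  obtain ⟨x, hx, hx'⟩ := hconn.intermediate_value hxa hxb hcont hl'
  exact ⟨x, hx, hx'⟩

lemma GoodW.step {R : Set (Fin 4 → S1)} (hR : R ⊆ {σ | CCW4 σ}) {m : ℕ} (hm : 1 ≤ m)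
    {S : Set (Fin 4 → S1)} (h : GoodW R (m + 1) S) :
    ∃ S', S' ⊆ S ∧ GoodW R m S' := by
  obtain ⟨hsub, hcomp, hconn, hbd, hlo, hhi⟩ := h
  have hfcont : ContinuousOn Lam S :=
    fun x hx => (continuousAt_Lam (hR (hsub hx))).continuousWithinAt
  have hm' : (1:ℝ) ≤ (m:ℝ) := by exact_mod_cast hm
  have hab : ((m:ℝ) + 1)⁻¹ < (m:ℝ) + 1 := by
    have h1 : ((m:ℝ) + 1)⁻¹ ≤ 1 := inv_le_one_of_one_le₀ (by linarith)
    linarith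
  have hfa : ∃ x ∈ S, Lam x ≤ ((m:ℝ) + 1)⁻¹ := by
    obtain ⟨x, hx, hx'⟩ := hlo
    refine ⟨x, hx, ?_⟩
    rw [hx']
    push_cast
    apply inv_anti₀ (by linarith)
    linarith
  have hfb : ∃ x ∈ S, (m:ℝ) + 1 ≤ Lam x := by
    obtain ⟨x, hx, hx'⟩ := hhi
    refine ⟨x, hx, ?_⟩
    rw [hx']
    push_cast
    linarith
  obtain ⟨K, hK1, hK2, hK3, hK4, hK5, hK6⟩ := strip_lemma hcomp hconn hfcont hab hfa hfb
  exact ⟨K, hK1, hK1.trans hsub, hK3, hK4, hK2, hK5, hK6⟩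

lemma chain_all {R : Set (Fin 4 → S1)} (hR : R ⊆ {σ | CCW4 σ}) :
    ∀ (M : ℕ) (S : Set (Fin 4 → S1)), GoodW R (M + 1) S →
    ∃ T : ℕ → Set (Fin 4 → S1),
      (∀ m, 1 ≤ m → m ≤ M + 1 → GoodW R m (T m)) ∧
      (∀ m, 1 ≤ m → m ≤ M → T m ⊆ T (m + 1)) ∧ T (M + 1) = S := by
  intro M
  induction M with
  | zero =>
    intro S hS
    refine ⟨fun _ => S, ?_, ?_, rfl⟩
    · intro m h1 h2
      have : m = 1 := by omega
      subst this
      exact hS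
    · intro m h1 h2
      omega
  | succ M ih =>
    intro S hS
    obtain ⟨S', hS'sub, hS'good⟩ := GoodW.step hR (Nat.le_add_left 1 M) hS
    obtain ⟨T', hT'good, hT'mono, hT'top⟩ := ih S' hS'good
    classical
    refine ⟨fun m => if m = M + 2 then S else T' m, ?_, ?_, by simp⟩
    · intro m h1 h2
      by_cases hcase : m = M + 2
      · subst hcase
        simpa using hS
      · have hle : m ≤ M + 1 := by omega
        simpa [hcase] using hT'good m h1 hle
    · intro m h1 h2
      by_cases hcase : m = M + 1
      · subst hcase
        have e1 : (fun m => if m = M + 2 then S else T' m) (M + 1) = T' (M + 1) := by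
          simp only [if_neg (by omega : ¬ M + 1 = M + 2)]
        have e2 : (fun m => if m = M + 2 then S else T' m) (M + 1 + 1) = S := by simp
        rw [e1, e2, hT'top]
        exact hS'sub
      · have hle : m ≤ M := by omega
        have e1 : (fun m => if m = M + 2 then S else T' m) m = T' m := by
          simp only [if_neg (by omega : ¬ m = M + 2)]
        have e2 : (fun m => if m = M + 2 then S else T' m) (m + 1) = T' (m + 1) := by
          simp only [if_neg (by omega : ¬ m + 1 = M + 2)]
        rw [e1, e2]
        exact hT'mono m h1 hle

end LimitExt
open LimitExt in
set_option maxHeartbeats 1000000 in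
theorem limit_extensive (φn : ℕ → S1 → ℂ) (φ : S1 → ℂ)
    (hcont : ∀ n, Continuous (φn n)) (hinj : ∀ n, Function.Injective (φn n))
    (hφc : Continuous φ) (hφi : Function.Injective φ)
    (hunif : TendstoUniformly φn φ Filter.atTop)
    (hA : ∀ n : ℕ, 1 ≤ n → ∃ A : Set (Fin 4 → S1),
        A ⊆ {σ | CCW4 σ ∧ IsLabeledRect (fun k => φn n (σ k))} ∧
        IsPathConnected A ∧ (∃ σ ∈ A, Lam σ = (n : ℝ)) ∧
        (∃ σ ∈ A, Lam σ = 1 / (n : ℝ))) :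
    ∃ A : Set (Fin 4 → S1),
      A ⊆ {σ | CCW4 σ ∧ IsLabeledRect (fun k => φ (σ k))} ∧
      IsConnected A ∧ Lam '' A = Set.Ioi 0 := by
  classical
  have hpi := Real.pi_pos
  set Rect : ℕ → Set (Fin 4 → S1) :=
    fun k => {σ | CCW4 σ ∧ IsLabeledRect fun i => φn (k + 2) (σ i)} with hRectdef
  have hRect : ∀ k, Rect k ⊆ {σ | CCW4 σ} := fun k σ h => h.1
  -- Step 1: initial Good sets from the path-connected families
  have hdata : ∀ k : ℕ, ∃ S : Set (Fin 4 → S1), GoodW (Rect k) (k + 1) S := by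
    intro k
    obtain ⟨A, hAsub, hApath, ⟨σb, hσb, hσb'⟩, ⟨σa, hσa, hσa'⟩⟩ := hA (k + 2) (by omega)
    obtain ⟨γ, hγ⟩ := hApath.joinedIn σa hσa σb hσb
    set P : Set (Fin 4 → S1) := Set.range γ with hP
    have hPcomp : IsCompact P := isCompact_range γ.continuous
    have hPconn : IsPreconnected P := (isConnected_range γ.continuous).isPreconnected
    have hPsub : P ⊆ A := by
      rintro p ⟨s, rfl⟩
      exact hγ s
    have hARect : A ⊆ Rect k := hAsub
    have hCCW : A ⊆ {σ | CCW4 σ} := fun σ h => (hAsub h).1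
    have hcont : ContinuousOn Lam P :=
      fun x hx => (continuousAt_Lam (hCCW (hPsub hx))).continuousWithinAt
    have hcast : (((k + 1 : ℕ) : ℝ) + 1) = (k : ℝ) + 2 := by push_cast; ring
    have hab : (((k + 1 : ℕ) : ℝ) + 1)⁻¹ < ((k + 1 : ℕ) : ℝ) + 1 := by
      rw [hcast]
      have h1 : ((k : ℝ) + 2)⁻¹ ≤ 1 := inv_le_one_of_one_le₀ (by linarith [Nat.cast_nonneg (α := ℝ) k])
      nlinarith [Nat.cast_nonneg (α := ℝ) k]
    have hfa : ∃ x ∈ P, Lam x ≤ (((k + 1 : ℕ) : ℝ) + 1)⁻¹ := by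
      refine ⟨σa, ⟨0, γ.source⟩, ?_⟩
      rw [hσa', hcast, one_div]
      push_cast
      exact le_refl _
    have hfb : ∃ x ∈ P, ((k + 1 : ℕ) : ℝ) + 1 ≤ Lam x := by
      refine ⟨σb, ⟨1, γ.target⟩, ?_⟩
      rw [hσb', hcast]
      push_cast
      exact le_refl _
    obtain ⟨S, hS1, hS2, hS3, hS4, hS5, hS6⟩ := strip_lemma hPcomp hPconn hcont hab hfa hfb
    exact ⟨S, (hS1.trans hPsub).trans hARect, hS3, hS4, hS2, hS5, hS6⟩
  choose S0 hS0 using hdata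
  -- Step 2: chains
  have hchain : ∀ k : ℕ, ∃ T : ℕ → Set (Fin 4 → S1),
      (∀ m, 1 ≤ m → m ≤ k + 1 → GoodW (Rect k) m (T m)) ∧
      (∀ m, 1 ≤ m → m ≤ k → T m ⊆ T (m + 1)) := by
    intro k
    obtain ⟨T, h1, h2, _⟩ := chain_all (hRect k) k (S0 k) (hS0 k)
    exact ⟨T, h1, h2⟩
  choose T hTgood hTmono using hchain
  have hTcum : ∀ k m, 1 ≤ m → m ≤ k + 1 → T k 1 ⊆ T k m := by
    intro k m
    induction m with
    | zero => omega
    | succ m ih =>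
      intro h1 h2
      by_cases hm : m = 0
      · subst hm
        exact le_refl _
      · exact (ih (by omega) (by omega)).trans (hTmono k m (by omega) (by omega))
  -- Step 3: base points with Lam = 1
  have htk : ∀ k, ∃ t ∈ T k 1, Lam t = 1 := by
    intro k
    apply GoodW.surj (hRect k) (hTgood k 1 le_rfl (by omega))
    norm_num
  choose t ht htl using htk
  obtain ⟨σs, uu, huu, hts⟩ := CompactSpace.tendsto_subseq t
  -- Step 4: per-window limit sets
  set Tm : ℕ → ℕ → Set (Fin 4 → S1) := fun m j => T (uu (j + m)) m with hTmdef
  set K : ℕ → Set (Fin 4 → S1) := fun m => lsSet (Tm m) with hKdef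
  have hgood' : ∀ m j, 1 ≤ m → GoodW (Rect (uu (j + m))) m (Tm m j) := by
    intro m j hm
    apply hTgood (uu (j + m)) m hm
    have h : j + m ≤ uu (j + m) := huu.le_apply
    omega
  have hKσ : ∀ m, 1 ≤ m → σs ∈ K m ∧ IsPreconnected (K m) := by
    intro m hm
    apply lsSet_preconnected (T := Tm m) (fun j => (hgood' m j hm).2.2.1)
      (t := fun j => t (uu (j + m)))
    · intro j
      apply hTcum (uu (j + m)) m hm
      · have h : j + m ≤ uu (j + m) := huu.le_apply
        omega
      · exact ht (uu (j + m))
    · exact hts.comp (tendsto_add_atTop_nat m)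
  -- Step 5: points of K m are good limit rectangles
  have hKmem : ∀ m, 1 ≤ m → ∀ x ∈ K m,
      (CCW4 x ∧ IsLabeledRect fun i => φ (x i)) ∧
      Lam x ∈ Set.Icc ((m : ℝ) + 1)⁻¹ ((m : ℝ) + 1) := by
    intro m hm x hx
    obtain ⟨jseq, y, hjge, hyT, hyx⟩ := lsSet_exists_seq hx
    have hmain := lim_lemma φn φ hφc hφi hunif (x := y) (σ := x)
      (ν := fun k' => uu (jseq k' + m) + 2)
      (a := ((m : ℝ) + 1)⁻¹) (b := (m : ℝ) + 1)
      (by positivity)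
      (fun k' => ((hgood' m (jseq k') hm).1 (hyT k')).1)
      (fun k' => ((hgood' m (jseq k') hm).1 (hyT k')).2)
      (fun k' => (hgood' m (jseq k') hm).2.2.2.1 _ (hyT k'))
      (tendsto_atTop_mono (fun k' => by
        have h1 := hjge k'
        have h2 : jseq k' + m ≤ uu (jseq k' + m) := huu.le_apply
        simp only [id]
        omega) tendsto_id)
      hyx
    exact ⟨⟨hmain.1, hmain.2.1⟩, hmain.2.2⟩
  -- Step 6: surjectivity of Lam on each window
  have hKsurj : ∀ m : ℕ, 1 ≤ m → ∀ l ∈ Set.Icc ((m : ℝ) + 1)⁻¹ ((m : ℝ) + 1),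
      ∃ x ∈ K m, Lam x = l := by
    intro m hm l hl
    have hy : ∀ j, ∃ y ∈ Tm m j, Lam y = l :=
      fun j => GoodW.surj (hRect _) (hgood' m j hm) hl
    choose y hyT hyl using hy
    obtain ⟨x, vv, hvv, hyx⟩ := CompactSpace.tendsto_subseq y
    have hxK : x ∈ K m :=
      mem_lsSet_of_seq (j := vv) (y := fun k' => y (vv k'))
        (fun k' => hvv.le_apply) (fun k' => hyT (vv k')) hyx
    have hlpos : 0 < l := lt_of_lt_of_le (by positivity) hl.1
    have hmain := lim_lemma φn φ hφc hφi hunif (x := fun k' => y (vv k')) (σ := x)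
      (ν := fun k' => uu (vv k' + m) + 2) (a := l) (b := l)
      hlpos
      (fun k' => ((hgood' m (vv k') hm).1 (hyT (vv k'))).1)
      (fun k' => ((hgood' m (vv k') hm).1 (hyT (vv k'))).2)
      (fun k' => by rw [hyl (vv k')]; exact ⟨le_refl l, le_refl l⟩)
      (tendsto_atTop_mono (fun k' => by
        have h2 : vv k' + m ≤ uu (vv k' + m) := huu.le_apply
        have h3 : k' ≤ vv k' := hvv.le_apply
        simp only [id]
        omega) tendsto_id)
      hyx
    exact ⟨x, hxK, le_antisymm hmain.2.2.2 hmain.2.2.1⟩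
  -- Final assembly
  refine ⟨⋃ m : ℕ, K (m + 1), ?_, ?_, ?_⟩
  · intro x hx
    obtain ⟨m, hxm⟩ := Set.mem_iUnion.1 hx
    exact (hKmem (m + 1) (by omega) x hxm).1
  · refine ⟨⟨σs, Set.mem_iUnion.2 ⟨0, (hKσ 1 le_rfl).1⟩⟩, ?_⟩
    apply isPreconnected_iUnion
    · exact ⟨σs, Set.mem_iInter.2 fun m => (hKσ (m + 1) (by omega)).1⟩
    · exact fun m => (hKσ (m + 1) (by omega)).2
  · apply Set.eq_of_subset_of_subset
    · rintro l ⟨x, hx, rfl⟩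
      obtain ⟨m, hxm⟩ := Set.mem_iUnion.1 hx
      exact Set.mem_Ioi.2 (Lam_pos ((hKmem (m + 1) (by omega) x hxm).1.1))
    · intro l hl
      have hlpos : (0:ℝ) < l := hl
      obtain ⟨Mn, hMn⟩ := exists_nat_ge (max l l⁻¹)
      have hMl : l ≤ (Mn : ℝ) := le_trans (le_max_left _ _) hMn
      have hMli : l⁻¹ ≤ (Mn : ℝ) := le_trans (le_max_right _ _) hMn
      have hwin : l ∈ Set.Icc (((Mn + 1 : ℕ) : ℝ) + 1)⁻¹ (((Mn + 1 : ℕ) : ℝ) + 1) := by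
        constructor
        · push_cast
          have h1 : l⁻¹ ≤ (Mn : ℝ) + 1 + 1 := by linarith
          have h2 := inv_anti₀ (inv_pos.2 hlpos) h1
          rwa [inv_inv] at h2
        · push_cast
          linarith
      obtain ⟨x, hxK, hxl⟩ := hKsurj (Mn + 1) (by omega) l hwin
      exact ⟨x, Set.mem_iUnion.2 ⟨Mn, hxK⟩, hxl⟩
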